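/- Let G be a cubic graph containing two distinct 4-cycles x x₁ x₂ y x and x y x₃ x₄ x sharing the edge xy, where the six vertices x, y, x₁, x₂, x₃, x₄ are pairwise distinct. For i = 1, 2, 3, 4, let x_i' be the third neighbor of x_i, and assume x₁', x₂', x₃', x₄' are pairwise distinct and distinct from x, y, x₁, x₂, x₃, x₄. If the square (G − xy)² is 7-colorable, then G² is 7-colorable. -/

import Mathlib

/-!
A map `c` is a proper colouring of `G²` exactly when it is injective on every closed
neighbourhood. Keep a `7`-colouring `C` of `(G - xy)²` off the core `{x, y, x₁, x₂, x₃, x₄}`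
and recolour the core. Each `xᵢ` must avoid at most four old colours (those of `xᵢ'`, of the
third neighbour of its neighbour among `x₁, …, x₄`, and of the two further neighbours of
`xᵢ'`), while `x` must avoid `C x₁', C x₄'` and `y` must avoid `C x₂', C x₃'`.
Choose the colours of the opposite vertices `x₁, x₃` so that together with `C x₁', C x₄'` they
use at most three colours: this is possible since two sets of at most four forbidden colours
that cover all seven colours share at most one. Then `x₂, x₄` are coloured greedily, then `y`,
and finally `x`, which sees at most six colours.
-/

/-- The square of a graph: two distinct vertices are adjacent iff their
distance in `G` is at most 2 (adjacent, or having a common neighbor). -/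
def graphSquare {V : Type*} (G : SimpleGraph V) : SimpleGraph V where
  Adj u v := u ≠ v ∧ (G.Adj u v ∨ ∃ w, G.Adj u w ∧ G.Adj w v)
  symm := by
    constructor
    rintro u v ⟨hne, h | ⟨w, h1, h2⟩⟩
    · exact ⟨hne.symm, Or.inl h.symm⟩
    · exact ⟨hne.symm, Or.inr ⟨w, h2.symm, h1.symm⟩⟩
  loopless := by constructor; rintro u ⟨hne, -⟩; exact hne rfl

namespace Set

variable {β γ : Type*}

lemma InjOn.of_eqOn_diff_singleton {s : Set β} {f g : β → γ} {b : β} (hf : InjOn f s)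
    (hg : EqOn g f (s \ {b})) (hb : g b ∉ f '' (s \ {b})) : InjOn g s := by
  refine InjOn.mono (subset_insert_sdiff_singleton b s) ?_
  rw [injOn_insert fun h => h.2 rfl, image_congr hg]
  exact ⟨(hf.mono sdiff_subset).congr hg.symm, hb⟩

lemma injOn_insert_four {f : β → γ} {a b c d : β} (h : [f a, f b, f c, f d].Nodup) :
    InjOn f {a, b, c, d} := by
  have := List.inj_on_of_nodup_map (l := [a, b, c, d]) (by simpa using h)
  intro p hp q hq
  exact this (by simpa using hp) (by simpa using hq)

end Set

namespace SimpleGraph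

open Set

variable {V K : Type*} {G : SimpleGraph V}

lemma injOn_closedNbhd_of_coloring_graphSquare (C : (graphSquare G).Coloring K) (w : V) :
    InjOn C (insert w (G.neighborSet w)) := by
  rintro u hu v hv hCuv
  by_contra huv
  refine C.valid ⟨huv, ?_⟩ hCuv
  rcases hu with rfl | hu <;> rcases hv with rfl | hv
  exacts [absurd rfl huv, Or.inl hv, Or.inl hu.symm, Or.inr ⟨w, hu.symm, hv⟩]

def coloringGraphSquareOfInjOn (c : V → K) (hc : ∀ w, InjOn c (insert w (G.neighborSet w))) :
    (graphSquare G).Coloring K :=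
  Coloring.mk c fun {u v} ⟨huv, h⟩ => by
    rcases h with h | ⟨w, hu, hv⟩
    · exact (hc u).ne (mem_insert u _) (mem_insert_of_mem u h) huv
    · exact (hc w).ne (mem_insert_of_mem w hu.symm) (mem_insert_of_mem w hv) huv

lemma neighborSet_deleteEdges_of_forall_notMem {s : Set (Sym2 V)} {w : V}
    (h : ∀ e ∈ s, w ∉ e) : (G.deleteEdges s).neighborSet w = G.neighborSet w := by
  ext v
  simpa using fun _ he => h _ he (Sym2.mem_mk_left w v)

lemma neighborSet_eq_of_ncard_eq_three {v a b c : V} (h3 : (G.neighborSet v).ncard = 3)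
    (ha : G.Adj v a) (hb : G.Adj v b) (hc : G.Adj v c) (hab : a ≠ b) (hac : a ≠ c) (hbc : b ≠ c) :
    G.neighborSet v = {a, b, c} := by
  refine (eq_of_subset_of_ncard_le ?_ ?_ (finite_of_ncard_ne_zero (by omega))).symm
  · rintro w (rfl | rfl | rfl) <;> assumption
  · rw [h3, ncard_eq_three.mpr ⟨a, b, c, hab, hac, hbc, rfl⟩]

lemma exists_neighborSet_eq_of_ncard_eq_three {v a : V} (h3 : (G.neighborSet v).ncard = 3)
    (ha : G.Adj v a) : ∃ b c, G.neighborSet v = {a, b, c} := by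
  obtain ⟨p, q, r, -, -, -, hN⟩ := ncard_eq_three.mp h3
  have : a ∈ ({p, q, r} : Set V) := hN ▸ ha
  rcases this with rfl | rfl | rfl
  · exact ⟨q, r, hN⟩
  · exact ⟨p, r, hN.trans (insert_comm _ _ _)⟩
  · exact ⟨p, q, hN.trans (by rw [pair_comm, insert_comm])⟩

end SimpleGraph

open Finset

lemma Finset.exists_notMem_of_card_lt {K : Type*} [Fintype K] {s : Finset K}
    (h : #s < Fintype.card K) : ∃ c, c ∉ s :=
  let ⟨c, _, hc⟩ := exists_mem_notMem_of_card_lt_card (t := univ) (by rwa [card_univ])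
  ⟨c, hc⟩

lemma exists_notMem_notMem_card_le_three {K : Type*} [Fintype K] [DecidableEq K]
    {F₁ F₃ : Finset K} {a b : K} (ha : a ∈ F₁) (hb : b ∈ F₃) (h₁ : #F₁ < Fintype.card K)
    (h₃ : #F₃ < Fintype.card K) (h : #F₁ + #F₃ ≤ Fintype.card K + 1) :
    ∃ c₁ ∉ F₁, ∃ c₃ ∉ F₃, #{c₁, c₃, a, b} ≤ 3 := by
  by_cases hz : ∃ z, z ∉ F₁ ∧ z ∉ F₃
  · obtain ⟨z, hz₁, hz₃⟩ := hz
    exact ⟨z, hz₁, z, hz₃, by simpa using card_le_three⟩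
  obtain ⟨c₁, hc₁⟩ := exists_notMem_of_card_lt h₁
  obtain ⟨c₃, hc₃⟩ := exists_notMem_of_card_lt h₃
  by_cases hab : a = b
  · exact ⟨c₁, hc₁, c₃, hc₃, by simpa [hab] using card_le_three⟩
  by_cases hb₁ : b ∉ F₁
  · exact ⟨b, hb₁, c₃, hc₃, by simpa [Finset.insert_comm] using card_le_three⟩
  by_cases ha₃ : a ∉ F₃
  · exact ⟨c₁, hc₁, a, ha₃, by simpa using card_le_three⟩
  exfalso
  have hunion : F₁ ∪ F₃ = univ := by
    refine eq_univ_of_forall fun z => ?_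
    by_contra hz'
    simp only [mem_union, not_or] at hz'
    exact hz ⟨z, hz'⟩
  have hinter : 2 ≤ #(F₁ ∩ F₃) := by
    have : ({a, b} : Finset K) ⊆ F₁ ∩ F₃ := by
      simp only [insert_subset_iff, singleton_subset_iff, mem_inter]
      exact ⟨⟨ha, not_not.1 ha₃⟩, not_not.1 hb₁, hb⟩
    simpa [card_pair hab] using card_le_card this
  have := card_union_add_card_inter F₁ F₃
  rw [hunion, card_univ] at this
  omega

/-- `cx, cy, cᵢ` are the new colours of `x, y, xᵢ`, `kᵢ` is the old colour of `xᵢ'` and `Fᵢ`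
the set of old colours that `xᵢ` must avoid; the six lists are the colours on the closed
neighbourhoods of `x, y, x₁, …, x₄`. -/
lemma exists_colors_of_two_squares {F₁ F₂ F₃ F₄ : Finset (Fin 7)} {k₁ k₂ k₃ k₄ : Fin 7}
    (h₁ : #F₁ ≤ 4) (h₂ : #F₂ ≤ 4) (h₃ : #F₃ ≤ 4) (h₄ : #F₄ ≤ 4)
    (hF₁ : {k₁, k₂} ⊆ F₁) (hF₂ : {k₁, k₂} ⊆ F₂) (hF₃ : {k₃, k₄} ⊆ F₃) (hF₄ : {k₃, k₄} ⊆ F₄) :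
    ∃ cx cy c₁ c₂ c₃ c₄, c₁ ∉ F₁ ∧ c₂ ∉ F₂ ∧ c₃ ∉ F₃ ∧ c₄ ∉ F₄ ∧
      [cx, cy, c₁, c₄].Nodup ∧ [cy, cx, c₂, c₃].Nodup ∧ [c₁, cx, c₂, k₁].Nodup ∧
      [c₂, c₁, cy, k₂].Nodup ∧ [c₃, cy, c₄, k₃].Nodup ∧ [c₄, c₃, cx, k₄].Nodup := by
  simp only [insert_subset_iff, singleton_subset_iff] at hF₁ hF₂ hF₃ hF₄
  have card_insert_insert (a b : Fin 7) (s : Finset (Fin 7)) :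
      #(insert a (insert b s)) ≤ #s + 2 :=
    (card_insert_le _ _).trans (by simpa using card_insert_le _ _)
  obtain ⟨c₁, hc₁, c₃, hc₃, hc₁₃⟩ := exists_notMem_notMem_card_le_three hF₁.1 hF₃.2
    (by simp; omega) (by simp; omega) (by simp; omega)
  obtain ⟨c₂, hc₂⟩ := exists_notMem_of_card_lt (s := insert c₁ (insert c₃ F₂))
    (by have := card_insert_insert c₁ c₃ F₂; simp; omega)
  obtain ⟨c₄, hc₄⟩ := exists_notMem_of_card_lt (s := insert c₁ (insert c₃ F₄))
    (by have := card_insert_insert c₁ c₃ F₄; simp; omega)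
  obtain ⟨cy, hcy⟩ := exists_notMem_of_card_lt (s := {c₁, c₂, c₃, c₄, k₂, k₃})
    (by have := card_le_six (a := c₁) (b := c₂) (c := c₃) (d := c₄) (e := k₂) (f := k₃)
        simp; omega)
  obtain ⟨cx, hcx⟩ :=
    exists_notMem_of_card_lt (s := insert cy (insert c₂ (insert c₄ {c₁, c₃, k₁, k₄})))
      (by have := card_insert_insert cy c₂ (insert c₄ {c₁, c₃, k₁, k₄})
          have := card_insert_le c₄ {c₁, c₃, k₁, k₄}
          simp only [Fintype.card_fin]; omega)
  refine ⟨cx, cy, c₁, c₂, c₃, c₄, hc₁, fun h => hc₂ (by simp [h]), hc₃,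
    fun h => hc₄ (by simp [h]), ?_⟩
  simp only [mem_insert, mem_singleton, not_or] at hc₂ hc₄ hcy hcx
  simp only [List.nodup_cons, List.mem_cons, List.not_mem_nil, not_or]
  grind

namespace SimpleGraph

variable {V K : Type*} {G : SimpleGraph V} {x y x₁ x₂ x₃ x₄ x₁' x₂' x₃' x₄' : V}

structure IsTwoSquares (G : SimpleGraph V) (x y x₁ x₂ x₃ x₄ x₁' x₂' x₃' x₄' : V) : Prop where
  nodup : [x, y, x₁, x₂, x₃, x₄, x₁', x₂', x₃', x₄'].Nodup
  neighborSet_x : G.neighborSet x = {y, x₁, x₄}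
  neighborSet_y : G.neighborSet y = {x, x₂, x₃}
  neighborSet_x₁ : G.neighborSet x₁ = {x, x₂, x₁'}
  neighborSet_x₂ : G.neighborSet x₂ = {x₁, y, x₂'}
  neighborSet_x₃ : G.neighborSet x₃ = {y, x₄, x₃'}
  neighborSet_x₄ : G.neighborSet x₄ = {x₃, x, x₄'}

namespace IsTwoSquares

open Set

lemma of_ncard_eq_three (hdeg : ∀ v, (G.neighborSet v).ncard = 3)
    (hnodup : [x, y, x₁, x₂, x₃, x₄, x₁', x₂', x₃', x₄'].Nodup) (exy : G.Adj x y)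
    (e1 : G.Adj x x₁) (e2 : G.Adj x₁ x₂) (e3 : G.Adj x₂ y)
    (e4 : G.Adj y x₃) (e5 : G.Adj x₃ x₄) (e6 : G.Adj x₄ x)
    (t1 : G.Adj x₁ x₁') (t2 : G.Adj x₂ x₂') (t3 : G.Adj x₃ x₃') (t4 : G.Adj x₄ x₄') :
    IsTwoSquares G x y x₁ x₂ x₃ x₄ x₁' x₂' x₃' x₄' := by
  have hd := hnodup
  simp only [List.nodup_cons, List.mem_cons, List.not_mem_nil, or_false, not_or] at hd
  refine ⟨hnodup, ?_, ?_, ?_, ?_, ?_, ?_⟩ <;>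
    refine neighborSet_eq_of_ncard_eq_three (hdeg _) ?_ ?_ ?_ ?_ ?_ ?_ <;>
    first | assumption | exact Adj.symm ‹_› | grind

lemma eq_of_adj_of_mem_of_notMem (h : IsTwoSquares G x y x₁ x₂ x₃ x₄ x₁' x₂' x₃' x₄')
    {v w : V} (hv : v ∈ ({x, y, x₁, x₂, x₃, x₄} : Set V))
    (hw : w ∉ ({x, y, x₁, x₂, x₃, x₄} : Set V)) (hvw : G.Adj v w) :
    v = x₁ ∧ w = x₁' ∨ v = x₂ ∧ w = x₂' ∨ v = x₃ ∧ w = x₃' ∨ v = x₄ ∧ w = x₄' := by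
  rw [← mem_neighborSet] at hvw
  rcases hv with rfl | rfl | rfl | rfl | rfl | rfl <;>
    simp only [h.neighborSet_x, h.neighborSet_y, h.neighborSet_x₁, h.neighborSet_x₂,
      h.neighborSet_x₃, h.neighborSet_x₄, mem_insert_iff, mem_singleton_iff] at hvw <;>
    rcases hvw with rfl | rfl | rfl <;> simp_all

lemma injOn_closedNbhd_of_recolor (h : IsTwoSquares G x y x₁ x₂ x₃ x₄ x₁' x₂' x₃' x₄')
    (C : (graphSquare (G.deleteEdges {s(x, y)})).Coloring K)
    {c : V → K} (hcC : ∀ v ∉ ({x, y, x₁, x₂, x₃, x₄} : Set V), c v = C v)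
    (hcore : ∀ w ∈ ({x, y, x₁, x₂, x₃, x₄} : Set V), InjOn c (insert w (G.neighborSet w)))
    (h₁ : c x₁ ∉ C '' (insert x₁' (G.neighborSet x₁') \ {x₁}))
    (h₂ : c x₂ ∉ C '' (insert x₂' (G.neighborSet x₂') \ {x₂}))
    (h₃ : c x₃ ∉ C '' (insert x₃' (G.neighborSet x₃') \ {x₃}))
    (h₄ : c x₄ ∉ C '' (insert x₄' (G.neighborSet x₄') \ {x₄})) (w : V) :
    InjOn c (insert w (G.neighborSet w)) := by
  by_cases hwS : w ∈ ({x, y, x₁, x₂, x₃, x₄} : Set V)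
  · exact hcore w hwS
  have hCw : InjOn C (insert w (G.neighborSet w)) := by
    rw [← neighborSet_deleteEdges_of_forall_notMem (s := {s(x, y)}) (by simp_all)]
    exact injOn_closedNbhd_of_coloring_graphSquare C w
  have hcore_adj : ∀ v ∈ insert w (G.neighborSet w), v ∈ ({x, y, x₁, x₂, x₃, x₄} : Set V) →
      v = x₁ ∧ w = x₁' ∨ v = x₂ ∧ w = x₂' ∨ v = x₃ ∧ w = x₃' ∨ v = x₄ ∧ w = x₄' := by
    rintro v (rfl | hv) hvS
    exacts [absurd hvS hwS, h.eq_of_adj_of_mem_of_notMem hvS hwS (G.adj_symm hv)]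
  have hd := h.nodup
  simp only [List.nodup_cons, List.mem_cons, List.not_mem_nil, or_false, not_or] at hd
  by_cases hwP : w = x₁' ∨ w = x₂' ∨ w = x₃' ∨ w = x₄'
  · have hrecolor : ∀ u, c u ∉ C '' (insert w (G.neighborSet w) \ {u}) →
        (∀ v ∈ insert w (G.neighborSet w), v ≠ u → v ∉ ({x, y, x₁, x₂, x₃, x₄} : Set V)) →
        InjOn c (insert w (G.neighborSet w)) := fun u hu hS =>
      hCw.of_eqOn_diff_singleton (fun v hv => hcC v (hS v hv.1 hv.2)) hu
    rcases hwP with rfl | rfl | rfl | rfl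
    · exact hrecolor x₁ h₁ fun v hv hvx hvS => by have := hcore_adj v hv hvS; grind
    · exact hrecolor x₂ h₂ fun v hv hvx hvS => by have := hcore_adj v hv hvS; grind
    · exact hrecolor x₃ h₃ fun v hv hvx hvS => by have := hcore_adj v hv hvS; grind
    · exact hrecolor x₄ h₄ fun v hv hvx hvS => by have := hcore_adj v hv hvS; grind
  · exact hCw.congr fun v hv => (hcC v fun hvS => by have := hcore_adj v hv hvS; tauto).symm

theorem colorable_graphSquare (h : IsTwoSquares G x y x₁ x₂ x₃ x₄ x₁' x₂' x₃' x₄')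
    (hdeg : ∀ v, (G.neighborSet v).ncard = 3)
    (h7 : (graphSquare (G.deleteEdges {s(x, y)})).Colorable 7) : (graphSquare G).Colorable 7 := by
  classical
  obtain ⟨C⟩ := h7
  have hd := h.nodup
  simp only [List.nodup_cons, List.mem_cons, List.not_mem_nil, or_false, not_or] at hd
  obtain ⟨a₁, b₁, hN₁⟩ := exists_neighborSet_eq_of_ncard_eq_three (hdeg x₁')
    (G.adj_symm (by simp [h.neighborSet_x₁] : x₁' ∈ G.neighborSet x₁))
  obtain ⟨a₂, b₂, hN₂⟩ := exists_neighborSet_eq_of_ncard_eq_three (hdeg x₂')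
    (G.adj_symm (by simp [h.neighborSet_x₂] : x₂' ∈ G.neighborSet x₂))
  obtain ⟨a₃, b₃, hN₃⟩ := exists_neighborSet_eq_of_ncard_eq_three (hdeg x₃')
    (G.adj_symm (by simp [h.neighborSet_x₃] : x₃' ∈ G.neighborSet x₃))
  obtain ⟨a₄, b₄, hN₄⟩ := exists_neighborSet_eq_of_ncard_eq_three (hdeg x₄')
    (G.adj_symm (by simp [h.neighborSet_x₄] : x₄' ∈ G.neighborSet x₄))
  obtain ⟨cx, cy, c₁, c₂, c₃, c₄, hc₁, hc₂, hc₃, hc₄, hx, hy, h₁, h₂, h₃, h₄⟩ :=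
    exists_colors_of_two_squares (k₁ := C x₁') (k₂ := C x₂') (k₃ := C x₃') (k₄ := C x₄')
      (F₁ := {C x₁', C x₂', C a₁, C b₁}) (F₂ := {C x₁', C x₂', C a₂, C b₂})
      (F₃ := {C x₃', C x₄', C a₃, C b₃}) (F₄ := {C x₃', C x₄', C a₄, C b₄})
      card_le_four card_le_four card_le_four card_le_four
      (by simp) (by simp) (by simp) (by simp)
  set c : V → Fin 7 := fun v => if v = x then cx else if v = y then cy else if v = x₁ then c₁
    else if v = x₂ then c₂ else if v = x₃ then c₃ else if v = x₄ then c₄ else C v with hc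
  refine ⟨coloringGraphSquareOfInjOn c (h.injOn_closedNbhd_of_recolor C ?_ ?_ ?_ ?_ ?_ ?_)⟩
  · intro v hv
    simp only [Set.mem_insert_iff, Set.mem_singleton_iff, not_or] at hv
    simp [hc, hv]
  · rintro w (rfl | rfl | rfl | rfl | rfl | rfl)
    · rw [h.neighborSet_x]; exact Set.injOn_insert_four (by simpa [hc, hd, eq_comm] using hx)
    · rw [h.neighborSet_y]; exact Set.injOn_insert_four (by simpa [hc, hd, eq_comm] using hy)
    · rw [h.neighborSet_x₁]; exact Set.injOn_insert_four (by simpa [hc, hd, eq_comm] using h₁)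
    · rw [h.neighborSet_x₂]; exact Set.injOn_insert_four (by simpa [hc, hd, eq_comm] using h₂)
    · rw [h.neighborSet_x₃]; exact Set.injOn_insert_four (by simpa [hc, hd, eq_comm] using h₃)
    · rw [h.neighborSet_x₄]; exact Set.injOn_insert_four (by simpa [hc, hd, eq_comm] using h₄)
  · rw [hN₁]; simp [hc, hd, eq_comm] at hc₁ ⊢; grind
  · rw [hN₂]; simp [hc, hd, eq_comm] at hc₂ ⊢; grind
  · rw [hN₃]; simp [hc, hd, eq_comm] at hc₃ ⊢; grind
  · rw [hN₄]; simp [hc, hd, eq_comm] at hc₄ ⊢; grind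

end IsTwoSquares
end SimpleGraph

theorem colorable_square_of_two_squares_sharing_edge_general
    {V : Type*} (G : SimpleGraph V)
    (hcubic : ∀ u : V, {w | G.Adj u w}.ncard = 3)
    (x y x₁ x₂ x₃ x₄ x₁' x₂' x₃' x₄' : V)
    (hdistinct : ([x, y, x₁, x₂, x₃, x₄, x₁', x₂', x₃', x₄'] : List V).Pairwise (· ≠ ·))
    (exy : G.Adj x y)
    (e1 : G.Adj x x₁) (e2 : G.Adj x₁ x₂) (e3 : G.Adj x₂ y)
    (e4 : G.Adj y x₃) (e5 : G.Adj x₃ x₄) (e6 : G.Adj x₄ x)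
    (t1 : G.Adj x₁ x₁') (t2 : G.Adj x₂ x₂') (t3 : G.Adj x₃ x₃') (t4 : G.Adj x₄ x₄')
    (h7 : (graphSquare (G.deleteEdges {s(x, y)})).Colorable 7) :
    (graphSquare G).Colorable 7 :=
  (SimpleGraph.IsTwoSquares.of_ncard_eq_three hcubic hdistinct exy e1 e2 e3 e4 e5 e6
    t1 t2 t3 t4).colorable_graphSquare hcubic h7

/-- Let `G` be a cubic graph containing two distinct 4-cycles `x x₁ x₂ y x`
and `x y x₃ x₄ x` sharing the edge `xy`, with `x, y, x₁, x₂, x₃, x₄` pairwise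
distinct, and where the third neighbors `x₁', x₂', x₃', x₄'` of `x₁, x₂, x₃,
x₄` are pairwise distinct and distinct from `x, y, x₁, x₂, x₃, x₄`. If
`(G - xy)²` is `7`-colorable then `G²` is `7`-colorable. -/
theorem colorable_square_of_two_squares_sharing_edge
    {V : Type*} [Fintype V] (G : SimpleGraph V)
    (hcubic : ∀ u : V, {w | G.Adj u w}.ncard = 3)
    (x y x₁ x₂ x₃ x₄ x₁' x₂' x₃' x₄' : V)
    (hdistinct : ([x, y, x₁, x₂, x₃, x₄, x₁', x₂', x₃', x₄'] : List V).Pairwise (· ≠ ·))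
    (exy : G.Adj x y)
    (e1 : G.Adj x x₁) (e2 : G.Adj x₁ x₂) (e3 : G.Adj x₂ y)
    (e4 : G.Adj y x₃) (e5 : G.Adj x₃ x₄) (e6 : G.Adj x₄ x)
    (t1 : G.Adj x₁ x₁') (t2 : G.Adj x₂ x₂') (t3 : G.Adj x₃ x₃') (t4 : G.Adj x₄ x₄')
    (h7 : (graphSquare (G.deleteEdges {s(x, y)})).Colorable 7) :
    (graphSquare G).Colorable 7 :=
  colorable_square_of_two_squares_sharing_edge_general G hcubic x y x₁ x₂ x₃ x₄ x₁' x₂' x₃' x₄'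
    hdistinct exy e1 e2 e3 e4 e5 e6 t1 t2 t3 t4 h7
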